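/- A mapping f: E(G) → E(H) between finite directed graphs is M-tension-continuous if and only if for every M-flow φ on G, the algebraic image φ_f, defined by φ_f(e') = ∑_{e: f(e)=e'} φ(e), is an M-flow on H. -/

import Mathlib

/-!
Tensions are exactly coboundaries `e ↦ g (tgt e) - g (src e)`: a closed walk splits into
circuits, so walk sums depend only on the endpoints and define a potential `g`. Summing
`g (tgt e) (φ e) - g (src e) (φ e)` over the edges and regrouping by vertices shows that it
vanishes whenever `φ` is balanced at every vertex.

If `f` is tension-continuous, the coboundary of the indicator of a vertex `w` of `H`, taken with
values in `End M`, pulls back to a tension on `G`; pairing its potential with a flow `φ` shows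
that the image of `φ` is balanced at `w`. Conversely, a circuit `C` of `G` carries the flows
`m • χ_C`, whose images are `m • χ_{f(C)}`; for a tension `δg` on `H`, choosing `m = g x` at each
vertex `x` makes the sum of `δg ∘ f` around `C` vanish.
-/

/-- A directed graph on vertex type `V`, given by its adjacency relation. -/
structure Dgraph (V : Type) where
  Adj : V → V → Prop

namespace Dgraph

variable {V : Type}

/-- The type of edges of a directed graph. -/
def Edge (D : Dgraph V) : Type := {p : V × V // D.Adj p.1 p.2}

def src {D : Dgraph V} (e : D.Edge) : V := e.1.1
def tgt {D : Dgraph V} (e : D.Edge) : V := e.1.2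

/-- A closed walk of length `n+1`: at step `i` the edge `e i` is traversed
forwards (if `dir i`) or backwards, from `v i` to `v (i+1)` (cyclically). -/
def IsClosedWalk (D : Dgraph V) {n : ℕ} (v : Fin (n + 1) → V)
    (e : Fin (n + 1) → D.Edge) (dir : Fin (n + 1) → Bool) : Prop :=
  ∀ i, if dir i then src (e i) = v i ∧ tgt (e i) = v (i + 1)
    else tgt (e i) = v i ∧ src (e i) = v (i + 1)

/-- A circuit: a closed walk with pairwise distinct vertices. -/
def IsCircuit (D : Dgraph V) {n : ℕ} (v : Fin (n + 1) → V)
    (e : Fin (n + 1) → D.Edge) (dir : Fin (n + 1) → Bool) : Prop :=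
  D.IsClosedWalk v e dir ∧ Function.Injective v

/-- An `M`-tension: the signed sum along every circuit vanishes. -/
def IsTension {M : Type} [AddCommGroup M] (D : Dgraph V) (τ : D.Edge → M) : Prop :=
  ∀ (n : ℕ) (v : Fin (n + 1) → V) (e : Fin (n + 1) → D.Edge) (dir : Fin (n + 1) → Bool),
    D.IsCircuit v e dir → ∑ i, (if dir i then τ (e i) else -τ (e i)) = 0

/-- `f : E(G) → E(H)` is `M`-tension-continuous if it lifts `M`-tensions to
`M`-tensions. -/
def TensionContinuous (M : Type) [AddCommGroup M] {V W : Type}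
    (G : Dgraph V) (H : Dgraph W) (f : G.Edge → H.Edge) : Prop :=
  ∀ τ : H.Edge → M, H.IsTension τ → G.IsTension (τ ∘ f)

end Dgraph

/-- An `M`-flow: at every vertex the sum of values on entering edges equals
the sum on leaving edges. -/
def Dgraph.IsFlow (M : Type) [AddCommGroup M] {V : Type} [DecidableEq V]
    (D : Dgraph V) [Fintype D.Edge] (φ : D.Edge → M) : Prop :=
  ∀ v : V, (∑ e : D.Edge, if Dgraph.tgt e = v then φ e else 0) =
    ∑ e : D.Edge, if Dgraph.src e = v then φ e else 0

section AlgebraicImage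

variable {ι κ M : Type} [Fintype ι] [DecidableEq κ] [AddCommGroup M]

def algebraicImage (f : ι → κ) (φ : ι → M) : κ → M := fun k => ∑ i, if f i = k then φ i else 0

lemma sum_eq_sum_fiberwise [Fintype κ] (g : ι → κ) (F : κ → ι → M) :
    ∑ i, F (g i) i = ∑ k, ∑ i, if g i = k then F k i else 0 := by
  rw [Finset.sum_comm]
  simp

lemma sum_ite_algebraicImage [Fintype κ] (f : ι → κ) (φ : ι → M) (P : κ → Prop) [DecidablePred P] :
    ∑ k, (if P k then algebraicImage f φ k else 0) = ∑ i, if P (f i) then φ i else 0 := by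
  rw [sum_eq_sum_fiberwise f fun k i => if P k then φ i else 0]
  refine Finset.sum_congr rfl fun k _ => ?_
  by_cases hk : P k <;> simp [algebraicImage, hk]

lemma algebraicImage_algebraicImage {ι' : Type} [Fintype ι'] [DecidableEq ι'] (f : ι' → κ)
    (g : ι → ι') (φ : ι → M) :
    algebraicImage f (algebraicImage g φ) = algebraicImage (f ∘ g) φ := by
  funext k
  exact sum_ite_algebraicImage g φ (f · = k)

lemma sum_sub_eq_zero_of_fiberwise_eq [Fintype κ] (t s : ι → κ) (F : κ → ι → M)
    (h : ∀ k, ∑ i, (if t i = k then F k i else 0) = ∑ i, if s i = k then F k i else 0) :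
    ∑ i, (F (t i) i - F (s i) i) = 0 := by
  rw [Finset.sum_sub_distrib, sum_eq_sum_fiberwise t, sum_eq_sum_fiberwise s,
    Finset.sum_congr rfl fun k _ => h k, sub_self]

end AlgebraicImage

theorem List.exists_eq_append_cons_append_cons_of_not_nodup_map {α β : Type*} (f : α → β)
    {l : List α} (h : ¬(l.map f).Nodup) :
    ∃ a b l₁ l₂ l₃, l = l₁ ++ a :: l₂ ++ b :: l₃ ∧ f a = f b := by
  induction l with
  | nil => simp at h
  | cons c l ih =>
    by_cases hl : (l.map f).Nodup
    · obtain ⟨b, hb, hfb⟩ : ∃ b ∈ l, f b = f c := by simpa [List.nodup_cons, hl] using h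
      obtain ⟨l₂, l₃, rfl⟩ := List.append_of_mem hb
      exact ⟨c, b, [], l₂, l₃, rfl, hfb.symm⟩
    · obtain ⟨a, b, l₁, l₂, l₃, rfl, hab⟩ := ih hl
      exact ⟨a, b, c :: l₁, l₂, l₃, rfl, hab⟩

namespace Dgraph

section Tensions

variable {V : Type} {D : Dgraph V}

def stepSrc (s : D.Edge × Bool) : V := if s.2 then src s.1 else tgt s.1
def stepTgt (s : D.Edge × Bool) : V := if s.2 then tgt s.1 else src s.1
def stepReverse (s : D.Edge × Bool) : D.Edge × Bool := (s.1, !s.2)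

@[simp] lemma stepSrc_stepReverse (s : D.Edge × Bool) : stepSrc (stepReverse s) = stepTgt s := by
  obtain ⟨e, b⟩ := s
  cases b <;> rfl

@[simp] lemma stepTgt_stepReverse (s : D.Edge × Bool) : stepTgt (stepReverse s) = stepSrc s := by
  obtain ⟨e, b⟩ := s
  cases b <;> rfl

def IsWalk (D : Dgraph V) : V → V → List (D.Edge × Bool) → Prop
  | u, w, [] => u = w
  | u, w, s :: L => stepSrc s = u ∧ D.IsWalk (stepTgt s) w L

@[simp] lemma isWalk_nil {u w : V} : D.IsWalk u w [] ↔ u = w := Iff.rfl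

@[simp] lemma isWalk_cons {u w : V} {s : D.Edge × Bool} {L : List (D.Edge × Bool)} :
    D.IsWalk u w (s :: L) ↔ stepSrc s = u ∧ D.IsWalk (stepTgt s) w L := Iff.rfl

lemma isWalk_append {u w : V} {L₁ L₂ : List (D.Edge × Bool)} :
    D.IsWalk u w (L₁ ++ L₂) ↔ ∃ x, D.IsWalk u x L₁ ∧ D.IsWalk x w L₂ := by
  induction L₁ generalizing u with
  | nil => simp
  | cons s L ih => simp [ih, and_assoc]

def reverseWalk (L : List (D.Edge × Bool)) : List (D.Edge × Bool) := L.reverse.map stepReverse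

lemma IsWalk.reverseWalk {u w : V} {L : List (D.Edge × Bool)} (h : D.IsWalk u w L) :
    D.IsWalk w u (reverseWalk L) := by
  induction L generalizing u with
  | nil => exact h.symm
  | cons s L ih =>
    simp only [Dgraph.reverseWalk, List.reverse_cons, List.map_append, isWalk_append] at ih ⊢
    exact ⟨_, ih h.2, by simp [h.1]⟩

def reachableSetoid (D : Dgraph V) : Setoid V where
  r u w := ∃ L, D.IsWalk u w L
  iseqv := ⟨fun _ => ⟨[], rfl⟩, fun ⟨_, h⟩ => ⟨_, h.reverseWalk⟩,
    fun ⟨L₁, h₁⟩ ⟨L₂, h₂⟩ => ⟨L₁ ++ L₂, isWalk_append.2 ⟨_, h₁, h₂⟩⟩⟩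

lemma IsWalk.map_stepTgt {u w : V} {L : List (D.Edge × Bool)} (h : D.IsWalk u w L) :
    u :: L.map stepTgt = L.map stepSrc ++ [w] := by
  induction L generalizing u with
  | nil => simpa using h
  | cons s L ih => simp [h.1, ih h.2]

lemma IsWalk.map_stepTgt_eq_rotate {u : V} {L : List (D.Edge × Bool)} (h : D.IsWalk u u L) :
    L.map stepTgt = (L.map stepSrc).rotate 1 := by
  cases L with
  | nil => rfl
  | cons s L => simpa [h.1] using h.map_stepTgt

lemma isCircuit_ofFn {n : ℕ} {u : V} {s : Fin (n + 1) → D.Edge × Bool}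
    (h : D.IsWalk u u (List.ofFn s)) (hinj : Function.Injective (stepSrc ∘ s)) :
    D.IsCircuit (stepSrc ∘ s) (Prod.fst ∘ s) (Prod.snd ∘ s) := by
  refine ⟨fun i => ?_, hinj⟩
  have hnext : stepTgt (s i) = stepSrc (s (i + 1)) := by
    calc stepTgt (s i) = ((List.ofFn s).map stepTgt)[(i : ℕ)]'(by simpa using i.isLt) := by
          simp only [List.getElem_map, List.getElem_ofFn]
      _ = (((List.ofFn s).map stepSrc).rotate 1)[(i : ℕ)]'(by simpa using i.isLt) :=
          List.getElem_of_eq h.map_stepTgt_eq_rotate _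
      _ = stepSrc (s (i + 1)) := by
          simp only [List.getElem_rotate, List.getElem_map, List.getElem_ofFn, List.length_map,
            List.length_ofFn]
          congr 3
          rw [Nat.add_mod_mod]
  cases hd : (s i).2 <;> simp_all [stepSrc, stepTgt]

variable {M : Type} [AddCommGroup M]

def walkSum (τ : D.Edge → M) (L : List (D.Edge × Bool)) : M :=
  (L.map fun s => if s.2 then τ s.1 else -τ s.1).sum

@[simp] lemma walkSum_nil (τ : D.Edge → M) : walkSum τ [] = 0 := rfl

@[simp] lemma walkSum_cons (τ : D.Edge → M) (s : D.Edge × Bool) (L : List (D.Edge × Bool)) :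
    walkSum τ (s :: L) = (if s.2 then τ s.1 else -τ s.1) + walkSum τ L := by
  simp [walkSum]

@[simp] lemma walkSum_append (τ : D.Edge → M) (L₁ L₂ : List (D.Edge × Bool)) :
    walkSum τ (L₁ ++ L₂) = walkSum τ L₁ + walkSum τ L₂ := by
  simp [walkSum]

@[simp] lemma walkSum_reverseWalk (τ : D.Edge → M) (L : List (D.Edge × Bool)) :
    walkSum τ (reverseWalk L) = -walkSum τ L := by
  induction L with
  | nil => simp [Dgraph.reverseWalk]
  | cons s L ih =>
    obtain ⟨e, b⟩ := s
    cases b <;> simp_all [Dgraph.reverseWalk, stepReverse]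

/-- Closed walks are sums of circuits: cut at a repeated vertex until none is left. -/
theorem IsTension.walkSum_eq_zero {τ : D.Edge → M} (hτ : D.IsTension τ) {u : V}
    {L : List (D.Edge × Bool)} (h : D.IsWalk u u L) : walkSum τ L = 0 := by
  induction hn : L.length using Nat.strong_induction_on generalizing u L with
  | _ n ih =>
    by_cases hnd : (L.map stepSrc).Nodup
    · cases n with
      | zero => simp [List.length_eq_zero_iff.1 hn]
      | succ n =>
        obtain ⟨s, rfl⟩ : ∃ s : Fin (n + 1) → D.Edge × Bool, List.ofFn s = L :=
          ⟨fun i => L[i.val], List.ext_getElem (by simp [hn]) fun _ _ _ => List.getElem_ofFn ..⟩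
        rw [List.map_ofFn, List.nodup_ofFn] at hnd
        simp only [walkSum, List.map_ofFn, List.sum_ofFn]
        exact hτ n _ _ _ (isCircuit_ofFn h hnd)
    · obtain ⟨a, b, A, B, C, rfl, hab⟩ :=
        List.exists_eq_append_cons_append_cons_of_not_nodup_map stepSrc hnd
      simp only [isWalk_append, List.append_assoc, List.cons_append, isWalk_cons] at h
      obtain ⟨_, hA, rfl, _, hB, rfl, hC⟩ := h
      have hcut : D.IsWalk u u (A ++ b :: C) := isWalk_append.2 ⟨_, hA, hab.symm, hC⟩
      have hloop : D.IsWalk (stepSrc a) (stepSrc a) (a :: B) := ⟨rfl, hab ▸ hB⟩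
      have hlen : (A ++ a :: B ++ b :: C).length = (A ++ b :: C).length + (a :: B).length := by
        simp only [List.length_append, List.length_cons]; omega
      rw [← hn, hlen] at ih
      have h₁ := ih _ (by simp) hcut rfl
      have h₂ := ih _ (by simp) hloop rfl
      calc walkSum τ (A ++ a :: B ++ b :: C) = walkSum τ (A ++ b :: C) + walkSum τ (a :: B) := by
            simp only [walkSum_append, walkSum_cons]; abel
        _ = 0 := by rw [h₁, h₂, add_zero]

theorem IsTension.walkSum_eq_of_isWalk {τ : D.Edge → M} (hτ : D.IsTension τ) {u w : V}
    {L₁ L₂ : List (D.Edge × Bool)} (h₁ : D.IsWalk u w L₁) (h₂ : D.IsWalk u w L₂) :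
    walkSum τ L₁ = walkSum τ L₂ := by
  have := hτ.walkSum_eq_zero (isWalk_append.2 ⟨w, h₁, h₂.reverseWalk⟩)
  rwa [walkSum_append, walkSum_reverseWalk, ← sub_eq_add_neg, sub_eq_zero] at this

theorem IsTension.exists_potential {τ : D.Edge → M} (hτ : D.IsTension τ) :
    ∃ g : V → M, ∀ e, τ e = g (tgt e) - g (src e) := by
  let root : V → V := fun v => (⟦v⟧ : Quotient D.reachableSetoid).out
  have hroot : ∀ v, ∃ L, D.IsWalk (root v) v L := fun v =>
    Quotient.mk_out (s := D.reachableSetoid) v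
  choose path hpath using hroot
  refine ⟨fun v => walkSum τ (path v), fun e => ?_⟩
  have hedge : D.IsWalk (src e) (tgt e) [(e, true)] := ⟨rfl, rfl⟩
  have hsame : root (src e) = root (tgt e) :=
    congrArg Quotient.out (Quotient.sound ⟨_, hedge⟩)
  have := hτ.walkSum_eq_of_isWalk (isWalk_append.2 ⟨_, hpath (src e), hedge⟩)
    (hsame ▸ hpath (tgt e))
  simp [← this]

theorem IsClosedWalk.sum_coboundary_eq_zero {n : ℕ} {v : Fin (n + 1) → V}
    {e : Fin (n + 1) → D.Edge} {dir : Fin (n + 1) → Bool} (hw : D.IsClosedWalk v e dir)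
    (g : V → M) :
    ∑ i, (if dir i then g (tgt (e i)) - g (src (e i))
      else -(g (tgt (e i)) - g (src (e i)))) = 0 := by
  have hstep : ∀ i, (if dir i then g (tgt (e i)) - g (src (e i))
      else -(g (tgt (e i)) - g (src (e i)))) = g (v (i + 1)) - g (v i) := by
    intro i
    have := hw i
    cases hd : dir i <;> simp only [hd, Bool.false_eq_true, if_true, if_false] at this ⊢ <;>
      simp [this.1, this.2]
  rw [Finset.sum_congr rfl fun i _ => hstep i, Finset.sum_sub_distrib, sub_eq_zero]
  exact Equiv.sum_comp (Equiv.addRight (1 : Fin (n + 1))) (g ∘ v)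

theorem isTension_coboundary (g : V → M) : D.IsTension fun e => g (tgt e) - g (src e) :=
  fun _ _ _ _ hC => hC.1.sum_coboundary_eq_zero g

theorem isTension_of_forall_isTension_apply {N : Type} [AddCommGroup N] {τ : D.Edge → M →+ N}
    (h : ∀ m, D.IsTension fun e => τ e m) : D.IsTension τ := by
  intro n v e dir hC
  ext m
  simpa [apply_ite (fun f : M →+ N => f m)] using h m n v e dir hC

end Tensions

section Flows

variable {V W : Type} [DecidableEq V] [DecidableEq W] {M : Type} [AddCommGroup M]

theorem isFlow_algebraicImage_iff {ι : Type} [Fintype ι] {D : Dgraph V} [Fintype D.Edge]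
    [DecidableEq D.Edge] (f : ι → D.Edge) (φ : ι → M) :
    D.IsFlow M (algebraicImage f φ) ↔
      ∀ v, ∑ i, (if tgt (f i) = v then φ i else 0) = ∑ i, if src (f i) = v then φ i else 0 := by
  simp only [IsFlow, sum_ite_algebraicImage]

theorem IsClosedWalk.isFlow_algebraicImage {D : Dgraph V} [Fintype D.Edge] [DecidableEq D.Edge]
    {n : ℕ} {v : Fin (n + 1) → V} {e : Fin (n + 1) → D.Edge} {dir : Fin (n + 1) → Bool}
    (hw : D.IsClosedWalk v e dir) (m : M) :
    D.IsFlow M (algebraicImage e fun i => if dir i then m else -m) := by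
  rw [isFlow_algebraicImage_iff]
  intro x
  rw [← sub_eq_zero, ← Finset.sum_sub_distrib]
  refine Eq.trans (Finset.sum_congr rfl fun i _ => ?_)
    (hw.sum_coboundary_eq_zero fun y => if y = x then m else 0)
  cases dir i <;> split_ifs <;> simp

theorem TensionContinuous.isFlow_algebraicImage [Fintype V] {G : Dgraph V} {H : Dgraph W}
    [Fintype G.Edge] [Fintype H.Edge] [DecidableEq H.Edge] {f : G.Edge → H.Edge}
    (hf : TensionContinuous M G H f) {φ : G.Edge → M} (hφ : G.IsFlow M φ) :
    H.IsFlow M (algebraicImage f φ) := by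
  rw [isFlow_algebraicImage_iff]
  intro w
  -- One `End M`-valued tension, so that a single potential on `G` serves every value of `φ`.
  let p : W → M →+ M := fun x => if x = w then AddMonoidHom.id M else 0
  have hσ : G.IsTension fun e => p (tgt (f e)) - p (src (f e)) :=
    isTension_of_forall_isTension_apply fun m => hf _ (isTension_coboundary fun x => p x m)
  obtain ⟨h, hh⟩ := hσ.exists_potential
  have := sum_sub_eq_zero_of_fiberwise_eq tgt src (fun v e => h v (φ e)) fun v => by
    simpa [apply_ite (h v), map_sum] using congrArg (h v) (hφ v)
  rw [← sub_eq_zero, ← Finset.sum_sub_distrib]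
  refine Eq.trans (Finset.sum_congr rfl fun e _ => ?_) this
  rw [← AddMonoidHom.sub_apply, ← hh e]
  split_ifs <;> simp [p, *]

theorem tensionContinuous_of_isFlow_algebraicImage [Fintype W] {G : Dgraph V} {H : Dgraph W}
    [Fintype G.Edge] [Fintype H.Edge] [DecidableEq H.Edge] {f : G.Edge → H.Edge}
    (h : ∀ φ : G.Edge → M, G.IsFlow M φ → H.IsFlow M (algebraicImage f φ)) :
    TensionContinuous M G H f := by
  classical
  intro τ hτ n v e dir hC
  obtain ⟨g, hg⟩ := hτ.exists_potential
  have himage (m : M) := h _ (hC.1.isFlow_algebraicImage m)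
  simp only [algebraicImage_algebraicImage, isFlow_algebraicImage_iff] at himage
  rw [← sum_sub_eq_zero_of_fiberwise_eq (tgt ∘ f ∘ e) (src ∘ f ∘ e)
    (fun x i => if dir i then g x else -g x) fun x => himage (g x) x]
  refine Finset.sum_congr rfl fun i _ => ?_
  cases dir i <;> simp [hg, neg_add_eq_sub]

end Flows

end Dgraph

/-- `f` is `M`-tension-continuous iff the algebraic image of every
`M`-flow on `G` is an `M`-flow on `H`. -/
theorem tensionContinuous_iff_flow_image {M : Type} [AddCommGroup M]
    {V W : Type} [Fintype V] [Fintype W] [DecidableEq V] [DecidableEq W]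
    (G : Dgraph V) (H : Dgraph W) [Fintype G.Edge] [Fintype H.Edge]
    [DecidableEq H.Edge] (f : G.Edge → H.Edge) :
    Dgraph.TensionContinuous M G H f ↔
      ∀ φ : G.Edge → M, Dgraph.IsFlow M G φ →
        Dgraph.IsFlow M H (fun e' => ∑ e : G.Edge, if f e = e' then φ e else 0) :=
  ⟨fun hf _ hφ => hf.isFlow_algebraicImage hφ, Dgraph.tensionContinuous_of_isFlow_algebraicImage⟩
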